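/- Neither 000 nor 111 is a factor of the Thue-Morse word; moreover, for every x ∈ {0,1} and n ≥ 0, the word x·μ^{2n}(x·x̄·x)·x is not a factor of the Thue-Morse word. -/

import Mathlib

/-!
Thue–Morse satisfies `t (2i) = t i` and `t (2i+1) = !t i`, so `t a = t (a+1)` forces `a` odd.
Hence `ccc` would need two consecutive odd positions, and `x x x̄ x x` (the case `n = 0`) two odd
positions at distance 3. For `n > 0`, with `v = μ^{2n-2}(x x̄ x) = x x̄ …`, an occurrence of
`x μ²(v) x` at `k` begins `x x x̄ x̄`, so `k` is odd and `μ(v) = x x̄ x̄ …` sits at `(k+1)/2`,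
which must be even; thus `k = 4b+3`, and desubstituting twice gives an occurrence of `x v x` at `b`.
-/

/-- The Thue-Morse morphism on letters: μ(0)=01, μ(1)=10 (0 = `false`, 1 = `true`). -/
def mu : Bool → List Bool
  | false => [false, true]
  | true  => [true, false]

/-- The Thue-Morse morphism extended to words. -/
def muW (w : List Bool) : List Bool := w.flatMap mu

/-- The finite word `u` is a prefix of the infinite word `x`. -/
def IsPrefixI (u : List Bool) (x : ℕ → Bool) : Prop :=
  ∀ i, i < u.length → u.getD i false = x i

/-- `t` is the Thue-Morse word: every `μ^n(0)` is a prefix of `t`. -/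
def IsTMWord (t : ℕ → Bool) : Prop :=
  ∀ n, IsPrefixI (muW^[n] [false]) t

/-- The finite word `u` is a factor of the infinite word `x`. -/
def IsFactorI (u : List Bool) (x : ℕ → Bool) : Prop :=
  ∃ k, ∀ i, i < u.length → u.getD i false = x (k + i)

def OccursAt (u : List Bool) (x : ℕ → Bool) (k : ℕ) : Prop :=
  ∀ i, i < u.length → u.getD i false = x (k + i)

section OccursAt

variable {u v : List Bool} {a : Bool} {x : ℕ → Bool} {k : ℕ}

theorem occursAt_nil : OccursAt [] x k := fun _ h => absurd h (Nat.not_lt_zero _)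

theorem occursAt_cons : OccursAt (a :: u) x k ↔ x k = a ∧ OccursAt u x (k + 1) := by
  constructor
  · intro h
    refine ⟨(h 0 (by simp)).symm, fun i hi => ?_⟩
    simpa [Nat.add_assoc, Nat.add_comm 1] using h (i + 1) (by simpa using hi)
  · rintro ⟨h0, h⟩ (_ | i) hi
    · exact h0.symm
    · simpa [Nat.add_assoc, Nat.add_comm 1] using h i (by simpa using hi)

theorem occursAt_append :
    OccursAt (u ++ v) x k ↔ OccursAt u x k ∧ OccursAt v x (k + u.length) := by
  induction u generalizing k with
  | nil => simp [occursAt_nil]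
  | cons a u ih => simp [occursAt_cons, ih, and_assoc, Nat.add_assoc, Nat.add_comm 1]

theorem occursAt_singleton : OccursAt [a] x k ↔ x k = a := by
  simp [occursAt_cons, occursAt_nil]

end OccursAt

theorem muW_cons (a : Bool) (w : List Bool) : muW (a :: w) = mu a ++ muW w := by
  simp [muW]

theorem muW_cons_not_cons (a : Bool) (w : List Bool) :
    muW (a :: (!a) :: w) = a :: (!a) :: (!a) :: a :: muW w := by
  cases a <;> rfl

theorem length_muW (w : List Bool) : (muW w).length = 2 * w.length := by
  induction w with
  | nil => rfl
  | cons a w ih => cases a <;> simp [muW_cons, mu, ih] <;> omega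

theorem getD_muW_two_mul (w : List Bool) (i : ℕ) :
    (muW w).getD (2 * i) false = w.getD i false := by
  induction w generalizing i with
  | nil => simp [muW]
  | cons a w ih =>
    cases i with
    | zero => cases a <;> rfl
    | succ i => cases a <;> simpa [muW_cons, mu, Nat.mul_succ] using ih i

theorem getD_muW_two_mul_add_one (w : List Bool) {i : ℕ} (hi : i < w.length) :
    (muW w).getD (2 * i + 1) false = !w.getD i false := by
  induction w generalizing i with
  | nil => simp at hi
  | cons a w ih =>
    cases i with
    | zero => cases a <;> rfl
    | succ i =>
      cases a <;> simpa [muW_cons, mu, Nat.mul_succ] using ih (Nat.lt_of_succ_lt_succ hi)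

theorem length_muW_iterate (w : List Bool) (n : ℕ) :
    (muW^[n] w).length = 2 ^ n * w.length := by
  induction n with
  | zero => simp
  | succ n ih => rw [Function.iterate_succ_apply', length_muW, ih, pow_succ]; ring

theorem exists_muW_iterate_cons_not_cons (a : Bool) (w : List Bool) (n : ℕ) :
    ∃ w', muW^[n] (a :: (!a) :: w) = a :: (!a) :: w' := by
  induction n with
  | zero => exact ⟨w, rfl⟩
  | succ n ih =>
    obtain ⟨w', hw'⟩ := ih
    exact ⟨(!a) :: a :: muW w', by rw [Function.iterate_succ_apply', hw', muW_cons_not_cons]⟩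

theorem lt_length_muW_iterate_singleton (a : Bool) (i : ℕ) : i < (muW^[i] [a]).length := by
  simpa [length_muW_iterate] using Nat.lt_two_pow_self

namespace IsTMWord

variable {t : ℕ → Bool}

theorem apply_two_mul (ht : IsTMWord t) (i : ℕ) : t (2 * i) = t i := by
  have h := ht (i + 1) (2 * i) (by
    have := lt_length_muW_iterate_singleton false i
    rw [Function.iterate_succ_apply', length_muW]; omega)
  rw [Function.iterate_succ_apply', getD_muW_two_mul,
    ht i i (lt_length_muW_iterate_singleton _ i)] at h
  exact h.symm

theorem apply_two_mul_add_one (ht : IsTMWord t) (i : ℕ) : t (2 * i + 1) = !t i := by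
  have hi := lt_length_muW_iterate_singleton false i
  have h := ht (i + 1) (2 * i + 1) (by rw [Function.iterate_succ_apply', length_muW]; omega)
  rw [Function.iterate_succ_apply', getD_muW_two_mul_add_one _ hi, ht i i hi] at h
  exact h.symm

theorem odd_of_apply_eq_apply_succ (ht : IsTMWord t) {a : ℕ} (h : t a = t (a + 1)) : Odd a := by
  obtain ⟨m, rfl | rfl⟩ := Nat.even_or_odd' a
  · rw [ht.apply_two_mul, ht.apply_two_mul_add_one] at h
    exact absurd h (by cases t m <;> decide)
  · exact odd_two_mul_add_one m

theorem not_occursAt_replicate_three (ht : IsTMWord t) (c : Bool) (k : ℕ) :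
    ¬ OccursAt [c, c, c] t k := by
  simp only [occursAt_cons, occursAt_nil, and_true]
  rintro ⟨h0, h1, h2⟩
  obtain ⟨i, hi⟩ := ht.odd_of_apply_eq_apply_succ (h0.trans h1.symm)
  obtain ⟨j, hj⟩ := ht.odd_of_apply_eq_apply_succ (h1.trans h2.symm)
  omega

theorem occursAt_of_occursAt_muW (ht : IsTMWord t) {w : List Bool} {q : ℕ}
    (h : OccursAt (muW w) t (2 * q)) : OccursAt w t q := by
  intro i hi
  rw [← getD_muW_two_mul, h (2 * i) (by rw [length_muW]; omega), ← Nat.mul_add, ht.apply_two_mul]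

theorem exists_occursAt_of_occursAt_muW_muW (ht : IsTMWord t) {a c : Bool} {w : List Bool}
    {k : ℕ} (h : OccursAt ([a] ++ muW (muW (a :: (!a) :: w)) ++ [c]) t k) :
    ∃ b, OccursAt ([a] ++ (a :: (!a) :: w) ++ [c]) t b := by
  set v := a :: (!a) :: w with hv
  simp only [occursAt_append, occursAt_singleton, List.length_append, List.length_singleton,
    length_muW] at h ⊢
  obtain ⟨⟨hk, hμμ⟩, hc⟩ := h
  have h1 : t (k + 1) = a := by
    have h := hμμ
    rw [hv, muW_cons_not_cons, muW_cons_not_cons] at h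
    exact (occursAt_cons.1 h).1
  obtain ⟨m, rfl⟩ := ht.odd_of_apply_eq_apply_succ (hk.trans h1.symm)
  have hμ : OccursAt (muW v) t (m + 1) :=
    ht.occursAt_of_occursAt_muW (by rwa [show 2 * (m + 1) = 2 * m + 1 + 1 by ring])
  obtain ⟨b, rfl⟩ : ∃ b, m = 2 * b + 1 := by
    have h := hμ
    rw [hv, muW_cons_not_cons] at h
    simp only [occursAt_cons] at h
    obtain ⟨b, hb⟩ := ht.odd_of_apply_eq_apply_succ (h.2.1.trans h.2.2.1.symm)
    exact ⟨b - 1, by omega⟩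
  refine ⟨b, ⟨?_, ?_⟩, ?_⟩
  · rwa [← Bool.not_not (t b), ← ht.apply_two_mul_add_one, ← ht.apply_two_mul_add_one]
  · exact ht.occursAt_of_occursAt_muW (by rwa [show 2 * (b + 1) = 2 * b + 1 + 1 by ring])
  · rw [← ht.apply_two_mul, ← ht.apply_two_mul, ← hc]
    congr 1
    ring

theorem not_isFactorI_bordered_muW_iterate (ht : IsTMWord t) (x : Bool) (n : ℕ) :
    ¬ IsFactorI ([x] ++ muW^[2 * n] [x, !x, x] ++ [x]) t := by
  induction n with
  | zero =>
    rintro ⟨k, hk⟩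
    have hk : OccursAt [x, x, !x, x, x] t k := hk
    simp only [occursAt_cons] at hk
    obtain ⟨h0, h1, -, h3, h4, -⟩ := hk
    obtain ⟨i, hi⟩ := ht.odd_of_apply_eq_apply_succ (h0.trans h1.symm)
    obtain ⟨j, hj⟩ := ht.odd_of_apply_eq_apply_succ (h3.trans h4.symm)
    omega
  | succ n ih =>
    rintro ⟨k, hk⟩
    obtain ⟨w, hw⟩ := exists_muW_iterate_cons_not_cons x [x] (2 * n)
    rw [show 2 * (n + 1) = 2 * n + 1 + 1 by ring, Function.iterate_succ_apply',
      Function.iterate_succ_apply', hw] at hk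
    exact ih (hw ▸ ht.exists_occursAt_of_occursAt_muW_muW hk)

end IsTMWord

theorem tm_forbidden_words (t : ℕ → Bool) (ht : IsTMWord t) :
    ¬ IsFactorI [false, false, false] t ∧ ¬ IsFactorI [true, true, true] t ∧
    ∀ (x : Bool) (n : ℕ), ¬ IsFactorI ([x] ++ muW^[2 * n] [x, !x, x] ++ [x]) t :=
  ⟨fun ⟨k, hk⟩ => ht.not_occursAt_replicate_three false k hk,
    fun ⟨k, hk⟩ => ht.not_occursAt_replicate_three true k hk, ht.not_isFactorI_bordered_muW_iterate⟩
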